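/- Under the same setting (F differentiable with Lφ ± F convex, φ σ-strongly convex, h the indicator of closed convex 𝒳, 0 < λ < 1/(2L)), let x ∈ 𝒳 and x̂ = argmin_y { F(y) + h(y) + (1/(2λ)) D_φ(y, x) }. Then ⟨∇F(x), x̂ − x⟩ ≤ −(1/(2λ) − L)·D_φ(x̂, x). -/

import Mathlib

/-!
Relative smoothness (convexity of `L φ + F`) gives the lower bound
`F x̂ ≥ F x + ⟪∇F x, x̂ - x⟫ - L D_φ(x̂, x)`, while comparing the Bregman proximal point `x̂`
with the feasible competitor `x`, for which `D_φ(x, x) = 0`, gives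
`F x̂ + D_φ(x̂, x) / (2λ) ≤ F x`. Adding the two inequalities proves the claim.
-/

open scoped InnerProductSpace

section FirstOrder

variable {E : Type*} [NormedAddCommGroup E] [NormedSpace ℝ E]

theorem ConvexOn.apply_sub_le_of_hasFDerivAt {s : Set E} {g : E → ℝ} {g' : StrongDual ℝ E}
    {x y : E} (hg : ConvexOn ℝ s g) (hx : x ∈ s) (hy : y ∈ s) (hg' : HasFDerivAt g g' x) :
    g' (y - x) ≤ g y - g x := by
  let line : ℝ →ᵃ[ℝ] E := AffineMap.lineMap x y
  have hline : HasDerivAt (g ∘ line) (g' (y - x)) 0 :=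
    (by simpa [line] using hg' : HasFDerivAt g g' (line 0)).comp_hasDerivAt 0
      AffineMap.hasDerivAt_lineMap
  have hslope := (hg.comp_affineMap line).le_slope_of_hasDerivAt
    (by simpa [line] using hx) (by simpa [line] using hy) zero_lt_one hline
  simpa [line, slope_def_field] using hslope

end FirstOrder

section Bregman

variable {E : Type*} [NormedAddCommGroup E] [InnerProductSpace ℝ E] [CompleteSpace E]

noncomputable def bregmanDiv (φ : E → ℝ) (u v : E) : ℝ :=
  φ u - φ v - ⟪gradient φ v, u - v⟫_ℝ

@[simp]
theorem bregmanDiv_self (φ : E → ℝ) (x : E) : bregmanDiv φ x x = 0 := by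
  simp [bregmanDiv]

theorem inner_gradient_sub_le_of_convexOn_const_mul_add {s : Set E} {F φ : E → ℝ} {L : ℝ}
    {x y : E} (hconv : ConvexOn ℝ s (fun z => L * φ z + F z)) (hx : x ∈ s) (hy : y ∈ s)
    (hF : DifferentiableAt ℝ F x) (hφ : DifferentiableAt ℝ φ x) :
    ⟪gradient F x, y - x⟫_ℝ ≤ F y - F x + L * bregmanDiv φ y x := by
  have hderiv := hconv.apply_sub_le_of_hasFDerivAt hx hy
    ((hφ.hasFDerivAt.const_mul L).add hF.hasFDerivAt)
  simp only [add_apply, smul_apply, smul_eq_mul] at hderiv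
  rw [bregmanDiv, inner_gradient_left, inner_gradient_left]
  linarith

end Bregman

theorem stmt10_general {d : ℕ} (F φ : EuclideanSpace ℝ (Fin d) → ℝ)
    (hF : Differentiable ℝ F) (hφ : Differentiable ℝ φ)
    (L : ℝ)
    (hL1 : ConvexOn ℝ Set.univ (fun z => L * φ z + F z))
    (X : Set (EuclideanSpace ℝ (Fin d)))
    (lam : ℝ)
    (D : EuclideanSpace ℝ (Fin d) → EuclideanSpace ℝ (Fin d) → ℝ)
    (hD : ∀ u v, D u v = φ u - φ v - (inner ℝ (gradient φ v) (u - v) : ℝ))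
    (x xhat : EuclideanSpace ℝ (Fin d)) (hx : x ∈ X)
    (hmin : ∀ y ∈ X,
      F xhat + 1 / (2 * lam) * D xhat x ≤ F y + 1 / (2 * lam) * D y x) :
    (inner ℝ (gradient F x) (xhat - x) : ℝ) ≤
      -(1 / (2 * lam) - L) * D xhat x := by
  obtain rfl : D = bregmanDiv φ := funext₂ hD
  have hlower := inner_gradient_sub_le_of_convexOn_const_mul_add hL1 (Set.mem_univ x)
    (Set.mem_univ xhat) (hF x) (hφ x)
  have hprox := hmin x hx
  rw [bregmanDiv_self, mul_zero, add_zero] at hprox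
  linarith

theorem stmt10 {d : ℕ} (F φ : EuclideanSpace ℝ (Fin d) → ℝ)
    (hF : Differentiable ℝ F) (hφ : Differentiable ℝ φ)
    (σ : ℝ) (hσ : 0 < σ)
    (hsc : ConvexOn ℝ Set.univ (fun z => φ z - σ / 2 * ‖z‖ ^ 2))
    (L : ℝ) (hL : 0 < L)
    (hL1 : ConvexOn ℝ Set.univ (fun z => L * φ z + F z))
    (hL2 : ConvexOn ℝ Set.univ (fun z => L * φ z - F z))
    (X : Set (EuclideanSpace ℝ (Fin d)))
    (hXne : X.Nonempty) (hXcl : IsClosed X) (hXcv : Convex ℝ X)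
    (lam : ℝ) (hlam : 0 < lam) (hlam' : lam < 1 / (2 * L))
    (D : EuclideanSpace ℝ (Fin d) → EuclideanSpace ℝ (Fin d) → ℝ)
    (hD : ∀ u v, D u v = φ u - φ v - (inner ℝ (gradient φ v) (u - v) : ℝ))
    (x xhat : EuclideanSpace ℝ (Fin d)) (hx : x ∈ X) (hxhat : xhat ∈ X)
    (hmin : ∀ y ∈ X,
      F xhat + 1 / (2 * lam) * D xhat x ≤ F y + 1 / (2 * lam) * D y x) :
    (inner ℝ (gradient F x) (xhat - x) : ℝ) ≤
      -(1 / (2 * lam) - L) * D xhat x :=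
  stmt10_general F φ hF hφ L hL1 X lam D hD x xhat hx hmin
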